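/- arXiv:math/0210051 — 2 statements merged into one kernel-verified Lean document; each statement's English description precedes it below -/
import Mathlib

section
/- Let P be a generic configuration of n points in the plane. Define P ∼ Q for distinct P,Q ∈ P iff n(P,Q) ≡ n−3 (mod 2), and P ∼ P always. Then ∼ is an equivalence relation on P. -/
open scoped Classical

noncomputable section

/-- Orientation determinant of two vectors in the plane. -/
def det2 (u v : ℝ × ℝ) : ℝ := u.1 * v.2 - u.2 * v.1

/-- The line through `A` and `B` separates the points `P` and `Q`
(they lie in distinct open half-planes determined by the line). -/
def SepLine (A B P Q : ℝ × ℝ) : Prop :=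
  det2 (B - A) (P - A) * det2 (B - A) (Q - A) < 0

/-- A finite planar point set is a generic configuration if no three of its
points are collinear. -/
def Generic (C : Finset (ℝ × ℝ)) : Prop :=
  ∀ a ∈ C, ∀ b ∈ C, ∀ c ∈ C, a ≠ b → a ≠ c → b ≠ c →
    ¬ Collinear ℝ ({a, b, c} : Set (ℝ × ℝ))

/-- `nsep C P Q` is the number of lines spanned by (unordered) pairs of points of
`C \ {P,Q}` that separate `P` from `Q`. -/
def nsep (C : Finset (ℝ × ℝ)) (P Q : ℝ × ℝ) : ℕ :=
  (((C \ {P, Q}).powersetCard 2).filter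
    (fun s => ∃ A ∈ s, ∃ B ∈ s, A ≠ B ∧ SepLine A B P Q)).card

/-- The Orchard relation: `P ∼ Q` iff `n(P,Q) ≡ n - 3 (mod 2)` where `n = |C|`. -/
def Orchard (C : Finset (ℝ × ℝ)) (P Q : ℝ × ℝ) : Prop :=
  (nsep C P Q : ℤ) ≡ (C.card : ℤ) - 3 [ZMOD 2]

/-- A configuration is monochromatic if all its points are Orchard-equivalent. -/
def Mono (C : Finset (ℝ × ℝ)) : Prop :=
  ∀ P ∈ C, ∀ Q ∈ C, P ≠ Q → Orchard C P Q

/-- A configuration is in convex position if each of its points is a vertex of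
the convex hull. -/
def ConvexPos (C : Finset (ℝ × ℝ)) : Prop :=
  ∀ P ∈ C, P ∉ convexHull ℝ ((C : Set (ℝ × ℝ)) \ {P})


lemma sign_even {x y z : ℝ} (hx : x ≠ 0) (hy : y ≠ 0) (hz : z ≠ 0) :
    ((if x*y < 0 then 1 else 0) + (if y*z < 0 then 1 else 0) + (if x*z < 0 then 1 else 0) : ZMod 2) = 0 := by
  rcases hx.lt_or_gt with hx | hx <;> rcases hy.lt_or_gt with hy | hy <;>
    rcases hz.lt_or_gt with hz | hz <;>
    simp [mul_neg_iff, hx, hy, hz, asymm hx, asymm hy, asymm hz] <;> decide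

lemma sign_odd {a b c : ℝ} (ha : a ≠ 0) (hb : b ≠ 0) (hc : c ≠ 0) :
    ((if 0 < b*c then 1 else 0) + (if 0 < a*c then 1 else 0) + (if 0 < a*b then 1 else 0) : ZMod 2) = 1 := by
  rcases ha.lt_or_gt with ha | ha <;> rcases hb.lt_or_gt with hb | hb <;>
    rcases hc.lt_or_gt with hc | hc <;>
    simp [mul_pos_iff, ha, hb, hc, asymm ha, asymm hb, asymm hc] <;> decide

lemma sepLine_comm (A B P Q : ℝ × ℝ) : SepLine A B P Q ↔ SepLine B A P Q := by
  unfold SepLine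
  rw [show det2 (A - B) (P - B) * det2 (A - B) (Q - B)
      = det2 (B - A) (P - A) * det2 (B - A) (Q - A) from by
    simp only [det2, Prod.fst_sub, Prod.snd_sub]; ring]

lemma sepLine_swap (A B P Q : ℝ × ℝ) : SepLine A B P Q ↔ SepLine A B Q P := by
  unfold SepLine; rw [mul_comm]

lemma collinear_of_det2_eq_zero {a b c : ℝ × ℝ} (hab : a ≠ b)
    (h : det2 (b - a) (c - a) = 0) : Collinear ℝ ({a, b, c} : Set (ℝ × ℝ)) := by
  simp only [det2, Prod.fst_sub, Prod.snd_sub] at h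
  have hex : ∃ t : ℝ, c - a = t • (b - a) := by
    rcases eq_or_ne (b.1 - a.1) 0 with h1 | h1
    · have h2 : b.2 - a.2 ≠ 0 := by
        intro h2
        apply hab
        have e1 : a.1 = b.1 := by linarith [sub_eq_zero.mp h1]
        have e2 : a.2 = b.2 := by linarith [sub_eq_zero.mp h2]
        exact Prod.ext e1 e2
      refine ⟨(c.2 - a.2) / (b.2 - a.2), Prod.ext ?_ ?_⟩
      · simp only [Prod.fst_sub, Prod.smul_fst, smul_eq_mul]
        have : (b.2 - a.2) * (c.1 - a.1) = 0 := by
          rw [h1, zero_mul, zero_sub, neg_eq_zero] at h; exact h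
        have hc1 : c.1 - a.1 = 0 := by
          rcases mul_eq_zero.mp this with h' | h'
          · exact absurd h' h2
          · exact h'
        rw [hc1, h1, mul_zero]
      · simp only [Prod.snd_sub, Prod.smul_snd, smul_eq_mul]
        field_simp
    · refine ⟨(c.1 - a.1) / (b.1 - a.1), Prod.ext ?_ ?_⟩
      · simp only [Prod.fst_sub, Prod.smul_fst, smul_eq_mul]
        field_simp
      · simp only [Prod.snd_sub, Prod.smul_snd, smul_eq_mul]
        field_simp
        nlinarith [h]
  obtain ⟨t, ht⟩ := hex
  rw [collinear_iff_of_mem (Set.mem_insert a {b, c})]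
  refine ⟨b - a, ?_⟩
  intro p hp
  rcases hp with rfl | rfl | rfl
  · exact ⟨0, by simp⟩
  · exact ⟨1, by simp⟩
  · exact ⟨t, by rw [← ht]; simp⟩

lemma pred_pair {A B P Q : ℝ × ℝ} (hAB : A ≠ B) :
    (∃ x ∈ ({A, B} : Finset (ℝ × ℝ)), ∃ y ∈ ({A, B} : Finset (ℝ × ℝ)),
      x ≠ y ∧ SepLine x y P Q) ↔ SepLine A B P Q := by
  constructor
  · rintro ⟨x, hx, y, hy, hxy, h⟩
    simp only [Finset.mem_insert, Finset.mem_singleton] at hx hy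
    rcases hx with rfl | rfl <;> rcases hy with rfl | rfl
    · exact absurd rfl hxy
    · exact h
    · exact (sepLine_comm _ _ _ _).mpr h
    · exact absurd rfl hxy
  · exact fun h => ⟨A, by simp, B, by simp, hAB, h⟩

lemma count_insert (T : Finset (ℝ × ℝ)) (R P Q : ℝ × ℝ) (hR : R ∉ T) :
    (((insert R T).powersetCard 2).filter
        (fun s => ∃ A ∈ s, ∃ B ∈ s, A ≠ B ∧ SepLine A B P Q)).card
      = ((T.powersetCard 2).filter
        (fun s => ∃ A ∈ s, ∃ B ∈ s, A ≠ B ∧ SepLine A B P Q)).card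
        + (T.filter (fun A => SepLine R A P Q)).card := by
  have hps := Finset.powersetCard_succ_insert hR 1
  norm_num at hps
  rw [hps, Finset.filter_union]
  have hdisj : Disjoint
      ((T.powersetCard 2).filter (fun s => ∃ A ∈ s, ∃ B ∈ s, A ≠ B ∧ SepLine A B P Q))
      ((((T.powersetCard 1).image (insert R))).filter
        (fun s => ∃ A ∈ s, ∃ B ∈ s, A ≠ B ∧ SepLine A B P Q)) := by
    apply Finset.disjoint_filter_filter
    rw [Finset.disjoint_left]
    intro s hs hs'
    rw [Finset.mem_powersetCard] at hs
    obtain ⟨t, _, rfl⟩ := Finset.mem_image.mp hs'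
    exact hR (hs.1 (Finset.mem_insert_self R t))
  rw [Finset.card_union_of_disjoint hdisj]
  congr 1
  have himg : (T.powersetCard 1).image (insert R)
      = T.image (fun A => ({R, A} : Finset (ℝ × ℝ))) := by
    rw [Finset.powersetCard_one, Finset.map_eq_image, Finset.image_image]; rfl
  rw [himg]
  have hinj : ∀ x ∈ T, ∀ y ∈ T,
      (fun A => ({R, A} : Finset (ℝ × ℝ))) x = (fun A => ({R, A} : Finset (ℝ × ℝ))) y → x = y := by
    intro x hx y hy h
    simp only at h
    have hx' : x ∈ ({R, y} : Finset (ℝ × ℝ)) := h ▸ (by simp)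
    simp only [Finset.mem_insert, Finset.mem_singleton] at hx'
    rcases hx' with rfl | rfl
    · exact absurd hx hR
    · rfl
  rw [Finset.card_filter, Finset.sum_image hinj, Finset.card_filter]
  apply Finset.sum_congr rfl
  intro A hA
  have hRA : R ≠ A := fun h => hR (h ▸ hA)
  exact if_congr (by simpa using pred_pair (P := P) (Q := Q) hRA) rfl rfl

lemma det2_ne_zero {C : Finset (ℝ × ℝ)} (hC : Generic C) {a b c : ℝ × ℝ}
    (ha : a ∈ C) (hb : b ∈ C) (hc : c ∈ C)
    (hab : a ≠ b) (hac : a ≠ c) (hbc : b ≠ c) :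
    det2 (b - a) (c - a) ≠ 0 :=
  fun h => hC a ha b hb c hc hab hac hbc (collinear_of_det2_eq_zero hab h)

lemma key (C : Finset (ℝ × ℝ)) (hC : Generic C) {P Q R : ℝ × ℝ}
    (hP : P ∈ C) (hQ : Q ∈ C) (hR : R ∈ C)
    (hPQ : P ≠ Q) (hPR : P ≠ R) (hQR : Q ≠ R) :
    ((nsep C P Q : ZMod 2) + (nsep C Q R : ZMod 2) + (nsep C P R : ZMod 2))
      = (C.card : ZMod 2) - 3 := by
  set T : Finset (ℝ × ℝ) := C \ {P, Q, R} with hT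
  have hmemT : ∀ x ∈ T, x ∈ C ∧ x ≠ P ∧ x ≠ Q ∧ x ≠ R := by
    intro x hx
    rw [hT, Finset.mem_sdiff] at hx
    simp only [Finset.mem_insert, Finset.mem_singleton] at hx
    push_neg at hx
    exact ⟨hx.1, hx.2⟩
  have hPT : P ∉ T := fun h => (hmemT P h).2.1 rfl
  have hQT : Q ∉ T := fun h => (hmemT Q h).2.2.1 rfl
  have hRT : R ∉ T := fun h => (hmemT R h).2.2.2 rfl
  have hins : ∀ X Y Z : ℝ × ℝ, X ∈ C → X ≠ Y → X ≠ Z →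
      ({Y, Z, X} : Finset (ℝ × ℝ)) = {P, Q, R} →
      C \ {Y, Z} = insert X T := by
    intro X Y Z hX hXY hXZ hset
    rw [hT, ← hset]
    ext x
    simp only [Finset.mem_sdiff, Finset.mem_insert, Finset.mem_singleton]
    constructor
    · rintro ⟨hx, hn⟩
      push_neg at hn
      by_cases hxX : x = X
      · exact Or.inl hxX
      · exact Or.inr ⟨hx, by push_neg; exact ⟨hn.1, hn.2, hxX⟩⟩
    · rintro (rfl | ⟨hx, hn⟩)
      · exact ⟨hX, by push_neg; exact ⟨hXY, hXZ⟩⟩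
      · push_neg at hn
        exact ⟨hx, by push_neg; exact ⟨hn.1, hn.2.1⟩⟩
  have e1 : nsep C P Q
      = ((T.powersetCard 2).filter
          (fun s => ∃ A ∈ s, ∃ B ∈ s, A ≠ B ∧ SepLine A B P Q)).card
        + (T.filter (fun A => SepLine R A P Q)).card := by
    unfold nsep
    rw [hins R P Q hR hPR.symm hQR.symm rfl]
    exact count_insert T R P Q hRT
  have e2 : nsep C Q R
      = ((T.powersetCard 2).filter
          (fun s => ∃ A ∈ s, ∃ B ∈ s, A ≠ B ∧ SepLine A B Q R)).card
        + (T.filter (fun A => SepLine P A Q R)).card := by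
    unfold nsep
    rw [hins P Q R hP hPQ hPR (by ext t; simp; tauto)]
    exact count_insert T P Q R hPT
  have e3 : nsep C P R
      = ((T.powersetCard 2).filter
          (fun s => ∃ A ∈ s, ∃ B ∈ s, A ≠ B ∧ SepLine A B P R)).card
        + (T.filter (fun A => SepLine Q A P R)).card := by
    unfold nsep
    rw [hins Q P R hQ hPQ.symm hQR (by ext t; simp; tauto)]
    exact count_insert T Q P R hQT
  have hsub : ({P, Q, R} : Finset (ℝ × ℝ)) ⊆ C := by
    intro x hx
    simp only [Finset.mem_insert, Finset.mem_singleton] at hx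
    rcases hx with rfl | rfl | rfl <;> assumption
  have hc3 : ({P, Q, R} : Finset (ℝ × ℝ)).card = 3 := by
    rw [Finset.card_insert_of_notMem (by simp [hPQ, hPR]),
      Finset.card_insert_of_notMem (by simp [hQR])]
    rfl
  have hTcard : T.card = C.card - 3 := by
    rw [hT, Finset.card_sdiff_of_subset hsub, hc3]
  have h3le : 3 ≤ C.card := by
    calc 3 = ({P, Q, R} : Finset (ℝ × ℝ)).card := hc3.symm
    _ ≤ C.card := Finset.card_le_card hsub
  -- the pair sums vanish mod 2
  have hA : (∑ s ∈ T.powersetCard 2,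
        ((if (∃ A ∈ s, ∃ B ∈ s, A ≠ B ∧ SepLine A B P Q) then (1 : ZMod 2) else 0)
          + (if (∃ A ∈ s, ∃ B ∈ s, A ≠ B ∧ SepLine A B Q R) then (1 : ZMod 2) else 0)
          + (if (∃ A ∈ s, ∃ B ∈ s, A ≠ B ∧ SepLine A B P R) then (1 : ZMod 2) else 0)))
      = 0 := by
    apply Finset.sum_eq_zero
    intro s hs
    rw [Finset.mem_powersetCard] at hs
    obtain ⟨hsT, hcard⟩ := hs
    obtain ⟨A, B, hAB, rfl⟩ := Finset.card_eq_two.mp hcard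
    have hAT := hmemT A (hsT (by simp))
    have hBT := hmemT B (hsT (by simp))
    rw [if_congr (pred_pair hAB) rfl rfl, if_congr (pred_pair hAB) rfl rfl,
      if_congr (pred_pair hAB) rfl rfl]
    unfold SepLine
    exact sign_even
      (det2_ne_zero hC hAT.1 hBT.1 hP hAB hAT.2.1 hBT.2.1)
      (det2_ne_zero hC hAT.1 hBT.1 hQ hAB hAT.2.2.1 hBT.2.2.1)
      (det2_ne_zero hC hAT.1 hBT.1 hR hAB hAT.2.2.2 hBT.2.2.2)
  -- the vertex sums give |T| mod 2
  have hB : (∑ A ∈ T,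
        ((if SepLine R A P Q then (1 : ZMod 2) else 0)
          + (if SepLine P A Q R then (1 : ZMod 2) else 0)
          + (if SepLine Q A P R then (1 : ZMod 2) else 0)))
      = (T.card : ZMod 2) := by
    rw [show (T.card : ZMod 2) = ∑ _A ∈ T, (1 : ZMod 2) by
      rw [Finset.sum_const, nsmul_eq_mul, mul_one]]
    apply Finset.sum_congr rfl
    intro A hA
    have hAT := hmemT A hA
    set a : ℝ := det2 (P - A) (Q - A) with ha
    set b : ℝ := det2 (Q - A) (R - A) with hb
    set c : ℝ := det2 (R - A) (P - A) with hcc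
    have ea : SepLine R A P Q ↔ 0 < b * c := by
      unfold SepLine
      rw [show det2 (A - R) (P - R) * det2 (A - R) (Q - R) = -(b * c) from by
        rw [hb, hcc]; simp only [det2, Prod.fst_sub, Prod.snd_sub]; ring]
      exact neg_lt_zero
    have eb : SepLine P A Q R ↔ 0 < a * c := by
      unfold SepLine
      rw [show det2 (A - P) (Q - P) * det2 (A - P) (R - P) = -(a * c) from by
        rw [ha, hcc]; simp only [det2, Prod.fst_sub, Prod.snd_sub]; ring]
      exact neg_lt_zero
    have ec : SepLine Q A P R ↔ 0 < a * b := by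
      unfold SepLine
      rw [show det2 (A - Q) (P - Q) * det2 (A - Q) (R - Q) = -(a * b) from by
        rw [ha, hb]; simp only [det2, Prod.fst_sub, Prod.snd_sub]; ring]
      exact neg_lt_zero
    rw [if_congr ea rfl rfl, if_congr eb rfl rfl, if_congr ec rfl rfl]
    exact sign_odd
      (det2_ne_zero hC hAT.1 hP hQ hAT.2.1 hAT.2.2.1 hPQ)
      (det2_ne_zero hC hAT.1 hQ hR hAT.2.2.1 hAT.2.2.2 hQR)
      (det2_ne_zero hC hAT.1 hR hP hAT.2.2.2 hAT.2.1 hPR.symm)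
  have e1' : (nsep C P Q : ZMod 2)
      = (∑ s ∈ T.powersetCard 2,
          if (∃ A ∈ s, ∃ B ∈ s, A ≠ B ∧ SepLine A B P Q) then (1 : ZMod 2) else 0)
        + ∑ A ∈ T, if SepLine R A P Q then (1 : ZMod 2) else 0 := by
    rw [e1]; push_cast [Finset.card_filter]; ring
  have e2' : (nsep C Q R : ZMod 2)
      = (∑ s ∈ T.powersetCard 2,
          if (∃ A ∈ s, ∃ B ∈ s, A ≠ B ∧ SepLine A B Q R) then (1 : ZMod 2) else 0)
        + ∑ A ∈ T, if SepLine P A Q R then (1 : ZMod 2) else 0 := by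
    rw [e2]; push_cast [Finset.card_filter]; ring
  have e3' : (nsep C P R : ZMod 2)
      = (∑ s ∈ T.powersetCard 2,
          if (∃ A ∈ s, ∃ B ∈ s, A ≠ B ∧ SepLine A B P R) then (1 : ZMod 2) else 0)
        + ∑ A ∈ T, if SepLine Q A P R then (1 : ZMod 2) else 0 := by
    rw [e3]; push_cast [Finset.card_filter]; ring
  have hcast : ((T.card : ℕ) : ZMod 2) = (C.card : ZMod 2) - 3 := by
    rw [hTcard, Nat.cast_sub h3le]
    norm_num
  rw [e1', e2', e3']
  have hS : ((∑ s ∈ T.powersetCard 2,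
          if (∃ A ∈ s, ∃ B ∈ s, A ≠ B ∧ SepLine A B P Q) then (1 : ZMod 2) else 0)
        + (∑ s ∈ T.powersetCard 2,
          if (∃ A ∈ s, ∃ B ∈ s, A ≠ B ∧ SepLine A B Q R) then (1 : ZMod 2) else 0)
        + (∑ s ∈ T.powersetCard 2,
          if (∃ A ∈ s, ∃ B ∈ s, A ≠ B ∧ SepLine A B P R) then (1 : ZMod 2) else 0)) = 0 := by
    rw [← Finset.sum_add_distrib, ← Finset.sum_add_distrib]
    exact hA
  have hU : ((∑ A ∈ T, if SepLine R A P Q then (1 : ZMod 2) else 0)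
        + (∑ A ∈ T, if SepLine P A Q R then (1 : ZMod 2) else 0)
        + (∑ A ∈ T, if SepLine Q A P R then (1 : ZMod 2) else 0)) = (T.card : ZMod 2) := by
    rw [← Finset.sum_add_distrib, ← Finset.sum_add_distrib]
    exact hB
  linear_combination hS + hU + hcast

lemma nsep_comm (C : Finset (ℝ × ℝ)) (P Q : ℝ × ℝ) : nsep C P Q = nsep C Q P := by
  unfold nsep
  rw [Finset.pair_comm P Q]
  congr 1
  apply Finset.filter_congr
  intro s _
  constructor <;> rintro ⟨A, hA, B, hB, hAB, h⟩ <;>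
    exact ⟨A, hA, B, hB, hAB, (sepLine_swap A B _ _).mp h⟩

lemma orchard_iff (C : Finset (ℝ × ℝ)) (x y : ℝ × ℝ) :
    Orchard C x y ↔ (nsep C x y : ZMod 2) = (C.card : ZMod 2) - 3 := by
  unfold Orchard
  have h := ZMod.intCast_eq_intCast_iff (nsep C x y : ℤ) ((C.card : ℤ) - 3) 2
  norm_num at h
  rw [← h]

/-- The Orchard Theorem: on a generic configuration, the relation
`P ∼ Q ↔ (P = Q ∨ n(P,Q) ≡ n-3 (mod 2))` is an equivalence relation. -/
theorem orchard_equivalence (C : Finset (ℝ × ℝ)) (hC : Generic C) :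
    Equivalence (fun P Q : {x // x ∈ C} => P = Q ∨ Orchard C P.1 Q.1) := by
  constructor
  · intro P
    exact Or.inl rfl
  · intro P Q h
    rcases h with rfl | h
    · exact Or.inl rfl
    · right
      rw [orchard_iff] at h ⊢
      rwa [nsep_comm]
  · intro P Q R hpq hqr
    rcases hpq with rfl | hpq
    · exact hqr
    rcases hqr with rfl | hqr
    · exact Or.inr hpq
    by_cases hPQ : P = Q
    · subst hPQ; exact Or.inr hqr
    by_cases hQR : Q = R
    · subst hQR; exact Or.inr hpq
    by_cases hPR : P = R
    · exact Or.inl hPR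
    right
    have hPQ' : P.1 ≠ Q.1 := fun h => hPQ (Subtype.ext h)
    have hQR' : Q.1 ≠ R.1 := fun h => hQR (Subtype.ext h)
    have hPR' : P.1 ≠ R.1 := fun h => hPR (Subtype.ext h)
    have hk := key C hC P.2 Q.2 R.2 hPQ' hPR' hQR'
    rw [orchard_iff] at hpq hqr ⊢
    rw [hpq, hqr] at hk
    set w : ZMod 2 := (C.card : ZMod 2) - 3 with hw
    have : w + w + (nsep C P.1 R.1 : ZMod 2) = w := hk
    rwa [CharTwo.add_self_eq_zero, zero_add] at this
end
end

section
/- Let P(t), −1 ≤ t ≤ 1, be a flip path involving three points R,S,T (i.e., P(t) is generic except at t=0 where exactly R(0),S(0),T(0) are collinear, each crossing transversally the line through the other two). Then for points P,Q both in {R,S,T} or both outside {R,S,T}, n(P(1),Q(1)) = n(P(−1),Q(−1)); and for P ∈ {R,S,T} and Q outside, n(P(1),Q(1)) = n(P(−1),Q(−1)) ± 1. Consequently, under the Orchard relation, P ∼ Q in P(−1) iff P' ∼ Q' in P(1) in the first case, and P ∼ Q in P(−1) iff P' ≁ Q' in P(1) in the second case. -/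
open scoped Classical

noncomputable section

/-- A labeled generic configuration: an injective labeling with no three points
collinear. -/
def GenericFun {n : ℕ} (f : Fin n → ℝ × ℝ) : Prop :=
  Function.Injective f ∧
    ∀ a b c : Fin n, a ≠ b → a ≠ c → b ≠ c →
      ¬ Collinear ℝ ({f a, f b, f c} : Set (ℝ × ℝ))

/-- `nsepF f i j`: the number of lines spanned by pairs of points of the labeled
configuration other than `f i`, `f j` that separate `f i` from `f j`. -/
def nsepF {n : ℕ} (f : Fin n → ℝ × ℝ) (i j : Fin n) : ℕ :=
  (((Finset.univ \ {i, j}).powersetCard 2).filter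
    (fun s => ∃ a ∈ s, ∃ b ∈ s, a ≠ b ∧ SepLine (f a) (f b) (f i) (f j))).card

/-- The Orchard relation for a labeled configuration of `n` points. -/
def OrchardF {n : ℕ} (f : Fin n → ℝ × ℝ) (i j : Fin n) : Prop :=
  (nsepF f i j : ℤ) ≡ (n : ℤ) - 3 [ZMOD 2]

lemma collinear_iff_det (a b c : ℝ × ℝ) :
    Collinear ℝ ({a, b, c} : Set (ℝ × ℝ)) ↔ det2 (b - a) (c - a) = 0 := by
  constructor
  · intro h
    rw [collinear_iff_of_mem (Set.mem_insert a _)] at h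
    obtain ⟨v, hv⟩ := h
    obtain ⟨rb, hb⟩ := hv b (by simp)
    obtain ⟨rc, hc⟩ := hv c (by simp)
    have hb' : b - a = rb • v := by rw [hb]; simp [vadd_eq_add]
    have hc' : c - a = rc • v := by rw [hc]; simp [vadd_eq_add]
    rw [hb', hc']
    simp only [det2, Prod.smul_fst, Prod.smul_snd, smul_eq_mul]
    ring
  · intro h
    by_cases hba : b = a
    · subst hba
      have he : ({b, b, c} : Set (ℝ × ℝ)) = {b, c} := by simp
      rw [he]; exact collinear_pair ℝ b c
    · rw [collinear_iff_of_mem (Set.mem_insert a _)]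
      have hv : b - a ≠ 0 := sub_ne_zero.mpr hba
      have key : ∀ w : ℝ × ℝ, det2 (b - a) w = 0 → ∃ r : ℝ, w = r • (b - a) := by
        intro w hw
        simp only [det2] at hw
        by_cases h1 : (b - a).1 ≠ 0
        · refine ⟨w.1 / (b - a).1, ?_⟩
          apply Prod.ext
          · rw [Prod.smul_fst, smul_eq_mul, div_mul_cancel₀ _ h1]
          · rw [Prod.smul_snd, smul_eq_mul, div_mul_eq_mul_div, eq_div_iff h1]
            linear_combination hw
        · have h2 : (b - a).2 ≠ 0 := by
            intro h2; exact hv (Prod.ext (by simpa using h1) h2)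
          push_neg at h1
          refine ⟨w.2 / (b - a).2, ?_⟩
          apply Prod.ext
          · rw [Prod.smul_fst, smul_eq_mul, div_mul_eq_mul_div, eq_div_iff h2, h1]
            linear_combination -hw + w.2 * h1
          · rw [Prod.smul_snd, smul_eq_mul, div_mul_cancel₀ _ h2]
      refine ⟨b - a, ?_⟩
      intro q hq
      rcases hq with rfl | rfl | rfl
      · exact ⟨0, by simp⟩
      · exact ⟨1, by simp [vadd_eq_add]⟩
      · obtain ⟨rr, hrr⟩ := key (q - a) h
        exact ⟨rr, by rw [vadd_eq_add, ← hrr]; abel⟩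

lemma sep_comm (A B P Q : ℝ × ℝ) : SepLine B A P Q ↔ SepLine A B P Q := by
  unfold SepLine
  have h : det2 (A - B) (P - B) * det2 (A - B) (Q - B)
      = det2 (B - A) (P - A) * det2 (B - A) (Q - A) := by
    simp only [det2, Prod.fst_sub, Prod.snd_sub]; ring
  rw [h]

lemma sign_const {g : ℝ → ℝ} (hc : Continuous g)
    (h : ∀ u ∈ Set.Icc (-1 : ℝ) 1, g u ≠ 0) : 0 < g (-1) * g 1 := by
  have h1 : g (-1) ≠ 0 := h (-1) (by norm_num)
  have h2 : g 1 ≠ 0 := h 1 (by norm_num)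
  rcases h1.lt_or_gt with hn | hp
  · rcases h2.lt_or_gt with hn2 | hp2
    · exact mul_pos_of_neg_of_neg hn hn2
    · exfalso
      have : (0:ℝ) ∈ Set.Icc (g (-1)) (g 1) := ⟨hn.le, hp2.le⟩
      have := intermediate_value_Icc (by norm_num : (-1:ℝ) ≤ 1) hc.continuousOn this
      obtain ⟨u, hu, hgu⟩ := this
      exact h u hu hgu
  · rcases h2.lt_or_gt with hn2 | hp2
    · exfalso
      have : (0:ℝ) ∈ Set.Icc (g 1) (g (-1)) := ⟨hn2.le, hp.le⟩
      have := intermediate_value_Icc' (by norm_num : (-1:ℝ) ≤ 1) hc.continuousOn this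
      obtain ⟨u, hu, hgu⟩ := this
      exact h u hu hgu
    · exact mul_pos hp hp2

lemma lt_iff_of_mul_pos {x y : ℝ} (h : 0 < x * y) : x < 0 ↔ y < 0 := by
  constructor <;> intro h1 <;> nlinarith

lemma lt_iff_not_of_mul_neg {x y : ℝ} (h : x * y < 0) : x < 0 ↔ ¬ y < 0 := by
  constructor
  · intro h1; nlinarith
  · intro h1
    push_neg at h1
    rcases h1.lt_or_eq with h2 | h2
    · nlinarith
    · nlinarith

lemma det_cont {n : ℕ} (p : ℝ → Fin n → ℝ × ℝ) (hcont : ∀ i, Continuous fun u => p u i)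
    (a b c : Fin n) : Continuous fun u => det2 (p u b - p u a) (p u c - p u a) := by
  unfold det2
  have ha := hcont a; have hb := hcont b; have hc := hcont c
  fun_prop

lemma pair_sep_iff {α : Type*} [DecidableEq α] (f : α → ℝ × ℝ) (P Q : ℝ × ℝ) (a b : α) (hab : a ≠ b)
    (S : Finset α) (hS : S = {a, b}) :
    (∃ x ∈ S, ∃ y ∈ S, x ≠ y ∧ SepLine (f x) (f y) P Q) ↔ SepLine (f a) (f b) P Q := by
  subst hS
  constructor
  · rintro ⟨x, hx, y, hy, hxy, hsep⟩
    simp only [Finset.mem_insert, Finset.mem_singleton] at hx hy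
    rcases hx with rfl | rfl <;> rcases hy with rfl | rfl
    · exact absurd rfl hxy
    · exact hsep
    · exact (sep_comm _ _ _ _).mp hsep
    · exact absurd rfl hxy
  · intro hsep
    exact ⟨a, by simp, b, by simp, hab, hsep⟩

-- finset triple manipulation
lemma triple_eq_iff {α : Type*} [DecidableEq α] (a b i : α) (ha : a ≠ i) (hb : b ≠ i)
    (T : Finset α) (hiT : i ∈ T) :
    ({a, b, i} : Finset α) = T ↔ ({a, b} : Finset α) = T.erase i := by
  constructor
  · intro h
    rw [← h]
    ext x
    simp only [Finset.mem_erase, Finset.mem_insert, Finset.mem_singleton]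
    constructor
    · rintro (rfl | rfl)
      · exact ⟨ha, Or.inl rfl⟩
      · exact ⟨hb, Or.inr (Or.inl rfl)⟩
    · rintro ⟨hx, rfl | rfl | rfl⟩
      · exact Or.inl rfl
      · exact Or.inr rfl
      · exact absurd rfl hx
  · intro h
    have : T = insert i (T.erase i) := (Finset.insert_erase hiT).symm
    rw [this, ← h]
    ext x
    simp only [Finset.mem_insert, Finset.mem_singleton]
    tauto

set_option maxHeartbeats 2000000 in
lemma tri_sign {n : ℕ} (p : ℝ → Fin n → ℝ × ℝ) (r s t : Fin n)
    (htrans : ∀ u v : ℝ, -1 ≤ u → u < 0 → 0 < v → v ≤ 1 →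
      det2 (p u s - p u r) (p u t - p u r) * det2 (p v s - p v r) (p v t - p v r) < 0)
    (x y z : Fin n) (hxy : x ≠ y) (hxz : x ≠ z) (hyz : y ≠ z)
    (h : ({x, y, z} : Finset (Fin n)) = {r, s, t}) :
    ∀ u v : ℝ, -1 ≤ u → u < 0 → 0 < v → v ≤ 1 →
      det2 (p u y - p u x) (p u z - p u x) * det2 (p v y - p v x) (p v z - p v x) < 0 := by
  intro u v hu1 hu2 hv1 hv2
  have ht := htrans u v hu1 hu2 hv1 hv2
  have hx : x ∈ ({r, s, t} : Finset (Fin n)) := by rw [← h]; simp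
  have hy : y ∈ ({r, s, t} : Finset (Fin n)) := by rw [← h]; simp
  have hz : z ∈ ({r, s, t} : Finset (Fin n)) := by rw [← h]; simp
  simp only [Finset.mem_insert, Finset.mem_singleton] at hx hy hz
  rcases hx with rfl | rfl | rfl <;> rcases hy with rfl | rfl | rfl <;>
    rcases hz with rfl | rfl | rfl <;>
    first
      | exact absurd rfl hxy
      | exact absurd rfl hxz
      | exact absurd rfl hyz
      | (simp only [det2, Prod.fst_sub, Prod.snd_sub] at ht ⊢; ring_nf at ht ⊢; linarith [ht])

lemma det_ne_zero {n : ℕ} (p : ℝ → Fin n → ℝ × ℝ) (r s t : Fin n)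
    (hgen : ∀ u : ℝ, u ∈ Set.Icc (-1 : ℝ) 1 → u ≠ 0 →
      Function.Injective (p u) ∧
      ∀ a b c : Fin n, a ≠ b → a ≠ c → b ≠ c →
        ¬ Collinear ℝ ({p u a, p u b, p u c} : Set (ℝ × ℝ)))
    (honly : ∀ a b c : Fin n, a ≠ b → a ≠ c → b ≠ c →
      Collinear ℝ ({p 0 a, p 0 b, p 0 c} : Set (ℝ × ℝ)) →
      ({a, b, c} : Finset (Fin n)) = {r, s, t})
    (x y z : Fin n) (hxy : x ≠ y) (hxz : x ≠ z) (hyz : y ≠ z)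
    (hne : ({x, y, z} : Finset (Fin n)) ≠ {r, s, t}) :
    ∀ u ∈ Set.Icc (-1 : ℝ) 1, det2 (p u y - p u x) (p u z - p u x) ≠ 0 := by
  intro u hu h0
  have hcol : Collinear ℝ ({p u x, p u y, p u z} : Set (ℝ × ℝ)) :=
    (collinear_iff_det _ _ _).mpr h0
  by_cases hu0 : u = 0
  · subst hu0
    exact hne (honly x y z hxy hxz hyz hcol)
  · exact (hgen u hu hu0).2 x y z hxy hxz hyz hcol

lemma sep_same {n : ℕ} (p : ℝ → Fin n → ℝ × ℝ) (hcont : ∀ i, Continuous fun u => p u i)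
    (r s t : Fin n)
    (hgen : ∀ u : ℝ, u ∈ Set.Icc (-1 : ℝ) 1 → u ≠ 0 →
      Function.Injective (p u) ∧
      ∀ a b c : Fin n, a ≠ b → a ≠ c → b ≠ c →
        ¬ Collinear ℝ ({p u a, p u b, p u c} : Set (ℝ × ℝ)))
    (honly : ∀ a b c : Fin n, a ≠ b → a ≠ c → b ≠ c →
      Collinear ℝ ({p 0 a, p 0 b, p 0 c} : Set (ℝ × ℝ)) →
      ({a, b, c} : Finset (Fin n)) = {r, s, t})
    (i j a b : Fin n) (hab : a ≠ b) (hai : a ≠ i) (haj : a ≠ j) (hbi : b ≠ i) (hbj : b ≠ j)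
    (hI : ({a, b, i} : Finset (Fin n)) ≠ {r, s, t})
    (hJ : ({a, b, j} : Finset (Fin n)) ≠ {r, s, t}) :
    (SepLine (p 1 a) (p 1 b) (p 1 i) (p 1 j) ↔
      SepLine (p (-1) a) (p (-1) b) (p (-1) i) (p (-1) j)) := by
  have hgi := sign_const (det_cont p hcont a b i)
    (det_ne_zero p r s t hgen honly a b i hab hai hbi hI)
  have hgj := sign_const (det_cont p hcont a b j)
    (det_ne_zero p r s t hgen honly a b j hab haj hbj hJ)
  unfold SepLine
  have key : 0 < (det2 (p 1 b - p 1 a) (p 1 i - p 1 a) * det2 (p 1 b - p 1 a) (p 1 j - p 1 a)) *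
      (det2 (p (-1) b - p (-1) a) (p (-1) i - p (-1) a) *
        det2 (p (-1) b - p (-1) a) (p (-1) j - p (-1) a)) := by nlinarith [hgi, hgj]
  exact lt_iff_of_mul_pos key

lemma sep_flip {n : ℕ} (p : ℝ → Fin n → ℝ × ℝ) (hcont : ∀ i, Continuous fun u => p u i)
    (r s t : Fin n)
    (hgen : ∀ u : ℝ, u ∈ Set.Icc (-1 : ℝ) 1 → u ≠ 0 →
      Function.Injective (p u) ∧
      ∀ a b c : Fin n, a ≠ b → a ≠ c → b ≠ c →
        ¬ Collinear ℝ ({p u a, p u b, p u c} : Set (ℝ × ℝ)))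
    (honly : ∀ a b c : Fin n, a ≠ b → a ≠ c → b ≠ c →
      Collinear ℝ ({p 0 a, p 0 b, p 0 c} : Set (ℝ × ℝ)) →
      ({a, b, c} : Finset (Fin n)) = {r, s, t})
    (htrans : ∀ u v : ℝ, -1 ≤ u → u < 0 → 0 < v → v ≤ 1 →
      det2 (p u s - p u r) (p u t - p u r) * det2 (p v s - p v r) (p v t - p v r) < 0)
    (i j a b : Fin n) (hab : a ≠ b) (hai : a ≠ i) (haj : a ≠ j) (hbi : b ≠ i) (hbj : b ≠ j)
    (hI : ({a, b, i} : Finset (Fin n)) = {r, s, t})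
    (hJ : ({a, b, j} : Finset (Fin n)) ≠ {r, s, t}) :
    (SepLine (p 1 a) (p 1 b) (p 1 i) (p 1 j) ↔
      ¬ SepLine (p (-1) a) (p (-1) b) (p (-1) i) (p (-1) j)) := by
  have hgi := tri_sign p r s t htrans a b i hab hai hbi hI (-1) 1
    (by norm_num) (by norm_num) (by norm_num) (by norm_num)
  have hgj := sign_const (det_cont p hcont a b j)
    (det_ne_zero p r s t hgen honly a b j hab haj hbj hJ)
  unfold SepLine
  have key : (det2 (p 1 b - p 1 a) (p 1 i - p 1 a) * det2 (p 1 b - p 1 a) (p 1 j - p 1 a)) *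
      (det2 (p (-1) b - p (-1) a) (p (-1) i - p (-1) a) *
        det2 (p (-1) b - p (-1) a) (p (-1) j - p (-1) a)) < 0 := by nlinarith [hgi, hgj]
  exact lt_iff_not_of_mul_neg key

/-- The Flip Proposition.  Along a flip path `p(t)`, `-1 ≤ t ≤ 1`, involving the
three points labeled `r,s,t` (generic except at `t = 0`, where exactly the triple
`r,s,t` is collinear, crossed transversally), the quantity `n(P,Q)` is unchanged
for `P,Q` both inside or both outside `{R,S,T}`, and changes by `±1` in the mixed
case; consequently the Orchard relation is preserved, resp. reversed. -/
theorem flip_proposition {n : ℕ} (p : ℝ → Fin n → ℝ × ℝ)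
    (hcont : ∀ i, Continuous fun u => p u i)
    (r s t : Fin n) (hrs : r ≠ s) (hrt : r ≠ t) (hst : s ≠ t)
    (hgen : ∀ u : ℝ, u ∈ Set.Icc (-1 : ℝ) 1 → u ≠ 0 → GenericFun (p u))
    (hinj0 : Function.Injective (p 0))
    (hcol : Collinear ℝ ({p 0 r, p 0 s, p 0 t} : Set (ℝ × ℝ)))
    (honly : ∀ a b c : Fin n, a ≠ b → a ≠ c → b ≠ c →
      Collinear ℝ ({p 0 a, p 0 b, p 0 c} : Set (ℝ × ℝ)) →
      ({a, b, c} : Finset (Fin n)) = {r, s, t})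
    (htrans : ∀ u v : ℝ, -1 ≤ u → u < 0 → 0 < v → v ≤ 1 →
      det2 (p u s - p u r) (p u t - p u r) * det2 (p v s - p v r) (p v t - p v r) < 0)
    (i j : Fin n) (hij : i ≠ j) :
    ((({i, j} : Set (Fin n)) ⊆ {r, s, t} ∨
        Disjoint ({i, j} : Set (Fin n)) ({r, s, t} : Set (Fin n))) →
      nsepF (p 1) i j = nsepF (p (-1)) i j ∧
        (OrchardF (p (-1)) i j ↔ OrchardF (p 1) i j)) ∧
    ((i ∈ ({r, s, t} : Set (Fin n)) ∧ j ∉ ({r, s, t} : Set (Fin n))) →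
      (nsepF (p 1) i j = nsepF (p (-1)) i j + 1 ∨
        nsepF (p (-1)) i j = nsepF (p 1) i j + 1) ∧
        (OrchardF (p (-1)) i j ↔ ¬ OrchardF (p 1) i j)) := by
  classical
  have hgen' : ∀ u : ℝ, u ∈ Set.Icc (-1 : ℝ) 1 → u ≠ 0 →
      Function.Injective (p u) ∧
      ∀ a b c : Fin n, a ≠ b → a ≠ c → b ≠ c →
        ¬ Collinear ℝ ({p u a, p u b, p u c} : Set (ℝ × ℝ)) :=
    fun u hu h0 => hgen u hu h0
  have memfacts : ∀ S ∈ ((Finset.univ \ {i, j} : Finset (Fin n)).powersetCard 2),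
      ∃ a b : Fin n, a ≠ b ∧ S = {a, b} ∧ a ≠ i ∧ a ≠ j ∧ b ≠ i ∧ b ≠ j := by
    intro S hS
    rw [Finset.mem_powersetCard] at hS
    obtain ⟨hsub, hcard⟩ := hS
    obtain ⟨a, b, hab, rfl⟩ := Finset.card_eq_two.mp hcard
    have ha := hsub (Finset.mem_insert_self a _)
    have hb : b ∈ Finset.univ \ {i, j} := hsub (by simp)
    simp only [Finset.mem_sdiff, Finset.mem_univ, true_and, Finset.mem_insert,
      Finset.mem_singleton, not_or] at ha hb
    exact ⟨a, b, hab, rfl, ha.1, ha.2, hb.1, hb.2⟩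
  constructor
  · -- case both inside or both outside
    intro hcase
    have hsame : ∀ S ∈ ((Finset.univ \ {i, j} : Finset (Fin n)).powersetCard 2),
        ((∃ a ∈ S, ∃ b ∈ S, a ≠ b ∧ SepLine (p 1 a) (p 1 b) (p 1 i) (p 1 j)) ↔
          (∃ a ∈ S, ∃ b ∈ S, a ≠ b ∧ SepLine (p (-1) a) (p (-1) b) (p (-1) i) (p (-1) j))) := by
      intro S hS
      obtain ⟨a, b, hab, rfl, hai, haj, hbi, hbj⟩ := memfacts S hS
      rw [pair_sep_iff (p 1) (p 1 i) (p 1 j) a b hab _ rfl,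
        pair_sep_iff (p (-1)) (p (-1) i) (p (-1) j) a b hab _ rfl]
      have hI : ({a, b, i} : Finset (Fin n)) ≠ {r, s, t} := by
        intro h
        rcases hcase with hin | hdis
        · have hjS : j = r ∨ j = s ∨ j = t := by
            have := hin (show j ∈ ({i, j} : Set (Fin n)) by simp)
            simpa using this
          have hjm : j ∈ ({a, b, i} : Finset (Fin n)) := by
            rw [h]; simp only [Finset.mem_insert, Finset.mem_singleton]; tauto
          simp only [Finset.mem_insert, Finset.mem_singleton] at hjm
          rcases hjm with h' | h' | h'
          · exact haj h'.symm
          · exact hbj h'.symm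
          · exact hij h'.symm
        · have hiN : i ∉ ({r, s, t} : Set (Fin n)) :=
            Set.disjoint_left.mp hdis (by simp)
          have : i ∈ ({a, b, i} : Finset (Fin n)) := by simp
          rw [h] at this
          simp only [Finset.mem_insert, Finset.mem_singleton] at this
          apply hiN; simpa using this
      have hJ : ({a, b, j} : Finset (Fin n)) ≠ {r, s, t} := by
        intro h
        rcases hcase with hin | hdis
        · have hiS : i = r ∨ i = s ∨ i = t := by
            have := hin (show i ∈ ({i, j} : Set (Fin n)) by simp)
            simpa using this
          have him : i ∈ ({a, b, j} : Finset (Fin n)) := by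
            rw [h]; simp only [Finset.mem_insert, Finset.mem_singleton]; tauto
          simp only [Finset.mem_insert, Finset.mem_singleton] at him
          rcases him with h' | h' | h'
          · exact hai h'.symm
          · exact hbi h'.symm
          · exact hij h'
        · have hjN : j ∉ ({r, s, t} : Set (Fin n)) :=
            Set.disjoint_left.mp hdis (by simp)
          have : j ∈ ({a, b, j} : Finset (Fin n)) := by simp
          rw [h] at this
          simp only [Finset.mem_insert, Finset.mem_singleton] at this
          apply hjN; simpa using this
      exact sep_same p hcont r s t hgen' honly i j a b hab hai haj hbi hbj hI hJ
    have hns : nsepF (p 1) i j = nsepF (p (-1)) i j := by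
      unfold nsepF
      congr 1
      exact Finset.filter_congr hsame
    refine ⟨hns, ?_⟩
    unfold OrchardF
    rw [hns]
  · -- mixed case
    rintro ⟨hiin, hjout⟩
    have hiF : i ∈ ({r, s, t} : Finset (Fin n)) := by
      simp only [Finset.mem_insert, Finset.mem_singleton]; simpa using hiin
    have hjF : ∀ x ∈ ({r, s, t} : Finset (Fin n)), x ≠ j := by
      intro x hx hxj
      apply hjout
      subst hxj
      simpa using hx
    set s₀ : Finset (Fin n) := ({r, s, t} : Finset (Fin n)).erase i with hs₀
    have hcard3 : ({r, s, t} : Finset (Fin n)).card = 3 := by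
      rw [Finset.card_insert_of_notMem (by simp [hrs, hrt]),
        Finset.card_insert_of_notMem (by simp [hst]), Finset.card_singleton]
    have hs₀card : s₀.card = 2 := by
      rw [hs₀, Finset.card_erase_of_mem hiF, hcard3]
    have hs₀mem : s₀ ∈ ((Finset.univ \ {i, j} : Finset (Fin n)).powersetCard 2) := by
      rw [Finset.mem_powersetCard]
      refine ⟨?_, hs₀card⟩
      intro x hx
      rw [hs₀, Finset.mem_erase] at hx
      simp only [Finset.mem_sdiff, Finset.mem_univ, true_and, Finset.mem_insert,
        Finset.mem_singleton, not_or]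
      exact ⟨hx.1, hjF x hx.2⟩
    -- S ≠ s₀ : condition preserved
    have hsame : ∀ S ∈ ((Finset.univ \ {i, j} : Finset (Fin n)).powersetCard 2), S ≠ s₀ →
        ((∃ a ∈ S, ∃ b ∈ S, a ≠ b ∧ SepLine (p 1 a) (p 1 b) (p 1 i) (p 1 j)) ↔
          (∃ a ∈ S, ∃ b ∈ S, a ≠ b ∧ SepLine (p (-1) a) (p (-1) b) (p (-1) i) (p (-1) j))) := by
      intro S hS hSne
      obtain ⟨a, b, hab, rfl, hai, haj, hbi, hbj⟩ := memfacts S hS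
      rw [pair_sep_iff (p 1) (p 1 i) (p 1 j) a b hab _ rfl,
        pair_sep_iff (p (-1)) (p (-1) i) (p (-1) j) a b hab _ rfl]
      have hI : ({a, b, i} : Finset (Fin n)) ≠ {r, s, t} := by
        intro h
        exact hSne ((triple_eq_iff a b i hai hbi _ hiF).mp h)
      have hJ : ({a, b, j} : Finset (Fin n)) ≠ {r, s, t} := by
        intro h
        have : j ∈ ({a, b, j} : Finset (Fin n)) := by simp
        rw [h] at this
        exact hjF j this rfl
      exact sep_same p hcont r s t hgen' honly i j a b hab hai haj hbi hbj hI hJ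
    -- s₀ : condition flipped
    have hflip :
        ((∃ a ∈ s₀, ∃ b ∈ s₀, a ≠ b ∧ SepLine (p 1 a) (p 1 b) (p 1 i) (p 1 j)) ↔
          ¬ (∃ a ∈ s₀, ∃ b ∈ s₀, a ≠ b ∧
            SepLine (p (-1) a) (p (-1) b) (p (-1) i) (p (-1) j))) := by
      obtain ⟨a, b, hab, heq, hai, haj, hbi, hbj⟩ := memfacts s₀ hs₀mem
      rw [heq, pair_sep_iff (p 1) (p 1 i) (p 1 j) a b hab _ rfl,
        pair_sep_iff (p (-1)) (p (-1) i) (p (-1) j) a b hab _ rfl]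
      have hI : ({a, b, i} : Finset (Fin n)) = {r, s, t} := by
        rw [triple_eq_iff a b i hai hbi _ hiF, ← heq, hs₀]
      have hJ : ({a, b, j} : Finset (Fin n)) ≠ {r, s, t} := by
        intro h
        have : j ∈ ({a, b, j} : Finset (Fin n)) := by simp
        rw [h] at this
        exact hjF j this rfl
      exact sep_flip p hcont r s t hgen' honly htrans i j a b hab hai haj hbi hbj hI hJ
    have key : nsepF (p 1) i j = nsepF (p (-1)) i j + 1 ∨
        nsepF (p (-1)) i j = nsepF (p 1) i j + 1 := by
      unfold nsepF
      set F1 := (((Finset.univ \ {i, j} : Finset (Fin n)).powersetCard 2).filter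
        (fun S => ∃ a ∈ S, ∃ b ∈ S, a ≠ b ∧
          SepLine (p 1 a) (p 1 b) (p 1 i) (p 1 j))) with hF1
      set F2 := (((Finset.univ \ {i, j} : Finset (Fin n)).powersetCard 2).filter
        (fun S => ∃ a ∈ S, ∃ b ∈ S, a ≠ b ∧
          SepLine (p (-1) a) (p (-1) b) (p (-1) i) (p (-1) j))) with hF2
      have herase : F1.erase s₀ = F2.erase s₀ := by
        ext S
        simp only [hF1, hF2, Finset.mem_erase, Finset.mem_filter]
        constructor
        · rintro ⟨hne, hmem, hcond⟩; exact ⟨hne, hmem, (hsame S hmem hne).mp hcond⟩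
        · rintro ⟨hne, hmem, hcond⟩; exact ⟨hne, hmem, (hsame S hmem hne).mpr hcond⟩
      by_cases hc : (∃ a ∈ s₀, ∃ b ∈ s₀, a ≠ b ∧ SepLine (p 1 a) (p 1 b) (p 1 i) (p 1 j))
      · left
        have h1 : s₀ ∈ F1 := Finset.mem_filter.mpr ⟨hs₀mem, hc⟩
        have h2 : s₀ ∉ F2 := fun hm => (hflip.mp hc) (Finset.mem_filter.mp hm).2
        calc F1.card = (F1.erase s₀).card + 1 := (Finset.card_erase_add_one h1).symm
          _ = (F2.erase s₀).card + 1 := by rw [herase]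
          _ = F2.card + 1 := by rw [Finset.erase_eq_of_notMem h2]
      · right
        have hc' : (∃ a ∈ s₀, ∃ b ∈ s₀, a ≠ b ∧
            SepLine (p (-1) a) (p (-1) b) (p (-1) i) (p (-1) j)) :=
          not_not.mp (fun hx => hc (hflip.mpr hx))
        have h1 : s₀ ∈ F2 := Finset.mem_filter.mpr ⟨hs₀mem, hc'⟩
        have h2 : s₀ ∉ F1 := fun hm => (hflip.mp (Finset.mem_filter.mp hm).2) hc'
        calc F2.card = (F2.erase s₀).card + 1 := (Finset.card_erase_add_one h1).symm
          _ = (F1.erase s₀).card + 1 := by rw [herase]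
          _ = F1.card + 1 := by rw [Finset.erase_eq_of_notMem h2]
    refine ⟨key, ?_⟩
    unfold OrchardF Int.ModEq
    rcases key with hk | hk <;> rw [hk] <;> push_cast <;> omega
end
end
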